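/- arXiv:2405.06364 — 2 statements merged into one kernel-verified Lean document; each statement's English description precedes it below -/
import Mathlib

section
/- Let C ⊆ ℝ^n be a nonempty closed convex set, let h_1, …, h_L : ℝ^n → ℝ be convex continuous functions, let ζ_1, …, ζ_L > 0 be weights, and let σ > 0. Suppose s* ∈ C and u_1, …, u_L ∈ ℝ^n satisfy: (i) Σ_{l=1}^L u_l = 0, and (ii) for every l, s* is a minimizer over C of the function v ↦ (1/2)‖v − (s* + u_l)‖² + σ² ζ_l h_l(v). Then s* is a global minimizer over C of the weighted sum h(s) = Σ_{l=1}^L ζ_l h_l(s); that is, for all v ∈ C, Σ_l ζ_l h_l(s*) ≤ Σ_l ζ_l h_l(v). -/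
/-!
Comparing the proximal point `p` of `x` with the points `p + t • (v - p)` of the segment towards
`v ∈ C` and letting `t → 0⁺` shows that `x - p` is a subgradient of `g` at `p` relative to `C`.
For the `l`-th agent this reads `⟪u l, v - s*⟫ ≤ σ² ζ l (h l v - h l s*)`; summing over `l`, the
left-hand sides cancel because `∑ l, u l = 0`.
-/

open Filter Topology Set
open scoped InnerProductSpace

theorem ConvexOn.inner_sub_le_sub_of_isMinOn {E : Type*} [NormedAddCommGroup E]
    [InnerProductSpace ℝ E] {C : Set E} {g : E → ℝ} (hg : ConvexOn ℝ C g) {x p v : E}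
    (hp : p ∈ C) (hmin : IsMinOn (fun y => (1 / 2) * ‖y - x‖ ^ 2 + g y) C p) (hv : v ∈ C) :
    ⟪x - p, v - p⟫_ℝ ≤ g v - g p := by
  set w := v - p
  have hstep : ∀ t ∈ Ioo (0 : ℝ) 1, ⟪x - p, w⟫_ℝ ≤ g v - g p + t / 2 * ‖w‖ ^ 2 := by
    rintro t ⟨ht0, ht1⟩
    have hseg : (1 - t) • p + t • v = p + t • w := by module
    have hmem : p + t • w ∈ C := hseg ▸ hg.1 hp hv (by linarith) ht0.le (by ring)
    have hconv : g (p + t • w) ≤ (1 - t) * g p + t * g v :=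
      hseg ▸ hg.2 hp hv (by linarith) ht0.le (by ring)
    have hexp : ‖p + t • w - x‖ ^ 2 = ‖x - p‖ ^ 2 - 2 * t * ⟪w, x - p⟫_ℝ + t ^ 2 * ‖w‖ ^ 2 := by
      rw [show p + t • w - x = t • w - (x - p) by abel, norm_sub_sq_real, real_inner_smul_left,
        norm_smul, mul_pow, Real.norm_eq_abs, sq_abs]
      ring
    have hle := isMinOn_iff.1 hmin _ hmem
    simp only [hexp, norm_sub_rev p x] at hle
    rw [real_inner_comm]
    have : t * ⟪w, x - p⟫_ℝ ≤ t * (g v - g p + t / 2 * ‖w‖ ^ 2) := by linarith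
    exact le_of_mul_le_mul_left this ht0
  have hlim : Tendsto (fun t : ℝ => g v - g p + t / 2 * ‖w‖ ^ 2) (𝓝[>] 0) (𝓝 (g v - g p)) :=
    tendsto_nhdsWithin_of_tendsto_nhds <|
      (by fun_prop : Continuous fun t : ℝ => g v - g p + t / 2 * ‖w‖ ^ 2).tendsto' 0 _ (by simp)
  exact ge_of_tendsto hlim (eventually_of_mem (Ioo_mem_nhdsGT one_pos) hstep)

theorem mace_consensus_is_map_minimizer_general
    {n L : ℕ} (C : Set (EuclideanSpace ℝ (Fin n)))
    (hCconv : Convex ℝ C)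
    (h : Fin L → EuclideanSpace ℝ (Fin n) → ℝ)
    (hconv : ∀ l, ConvexOn ℝ Set.univ (h l))
    (ζ : Fin L → ℝ) (hζ : ∀ l, 0 < ζ l)
    (σ : ℝ) (hσ : 0 < σ)
    (sstar : EuclideanSpace ℝ (Fin n)) (hs : sstar ∈ C)
    (u : Fin L → EuclideanSpace ℝ (Fin n))
    (hsum : ∑ l, u l = 0)
    (hmin : ∀ l, ∀ v ∈ C,
      (1/2) * ‖sstar - (sstar + u l)‖^2 + σ^2 * ζ l * h l sstar ≤
      (1/2) * ‖v - (sstar + u l)‖^2 + σ^2 * ζ l * h l v) :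
    ∀ v ∈ C, ∑ l, ζ l * h l sstar ≤ ∑ l, ζ l * h l v := by
  intro v hv
  have hforce : ∀ l, ⟪u l, v - sstar⟫_ℝ ≤ σ ^ 2 * ζ l * h l v - σ ^ 2 * ζ l * h l sstar := by
    intro l
    have hg : ConvexOn ℝ C fun y => σ ^ 2 * ζ l * h l y :=
      ((hconv l).subset (subset_univ C) hCconv).smul (by have := hζ l; positivity)
    simpa using hg.inner_sub_le_sub_of_isMinOn hs (isMinOn_iff.2 (hmin l)) hv
  have hweighted : 0 ≤ σ ^ 2 * (∑ l, ζ l * h l v - ∑ l, ζ l * h l sstar) :=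
    calc 0 = ⟪∑ l, u l, v - sstar⟫_ℝ := by rw [hsum, inner_zero_left]
      _ = ∑ l, ⟪u l, v - sstar⟫_ℝ := sum_inner _ _ _
      _ ≤ ∑ l, (σ ^ 2 * ζ l * h l v - σ ^ 2 * ζ l * h l sstar) :=
        Finset.sum_le_sum fun l _ => hforce l
      _ = σ ^ 2 * (∑ l, ζ l * h l v - ∑ l, ζ l * h l sstar) := by
        simp only [mul_sub, Finset.mul_sum, mul_assoc, Finset.sum_sub_distrib]
  linarith [nonneg_of_mul_nonneg_right hweighted (by positivity)]

/-- MACE (Theorem 1 of the paper): if `s*` together with forces `u_l` summing to zero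
satisfies the equilibrium conditions (each `s*` is a proximal point of the shifted input),
then `s*` globally minimizes the weighted MAP cost over `C`. -/
theorem mace_consensus_is_map_minimizer
    {n L : ℕ} (C : Set (EuclideanSpace ℝ (Fin n)))
    (hCne : C.Nonempty) (hCclosed : IsClosed C) (hCconv : Convex ℝ C)
    (h : Fin L → EuclideanSpace ℝ (Fin n) → ℝ)
    (hconv : ∀ l, ConvexOn ℝ Set.univ (h l))
    (hcont : ∀ l, Continuous (h l))
    (ζ : Fin L → ℝ) (hζ : ∀ l, 0 < ζ l)
    (σ : ℝ) (hσ : 0 < σ)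
    (sstar : EuclideanSpace ℝ (Fin n)) (hs : sstar ∈ C)
    (u : Fin L → EuclideanSpace ℝ (Fin n))
    (hsum : ∑ l, u l = 0)
    (hmin : ∀ l, ∀ v ∈ C,
      (1/2) * ‖sstar - (sstar + u l)‖^2 + σ^2 * ζ l * h l sstar ≤
      (1/2) * ‖v - (sstar + u l)‖^2 + σ^2 * ζ l * h l v) :
    ∀ v ∈ C, ∑ l, ζ l * h l sstar ≤ ∑ l, ζ l * h l v :=
  mace_consensus_is_map_minimizer_general C hCconv h hconv ζ hζ σ hσ sstar hs u hsum hmin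
end

section
/- Let V be a real vector space, let G : V → V be a linear map with G ∘ G = G, and let F : V → V be an arbitrary map. For S ∈ V, set Q = (2G − id)(S). Then F(S) = G(S) if and only if Q is a fixed point of the composition T = (2F − id) ∘ (2G − id), i.e. (2F − id)((2G − id)(Q)) = Q. Moreover, in that case S = (2G − id)(Q). -/
/-! For an idempotent linear `G`, the map `x ↦ 2 G x - x` is a linear involution, since
`G (2 G x - x) = G x`. Hence `S = (2G - id) Q`, so `T Q = (2F - id) S`, and the fixed-point
equation `2 F S - S = 2 G S - S` is the consensus equation `F S = G S` after cancelling the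
invertible factor `2`. -/

section Reflection

variable {R V : Type*} [Ring R] [AddCommGroup V] [Module R V]

theorem LinearMap.apply_two_smul_sub_self_of_idempotent {G : V →ₗ[R] V}
    (hG : ∀ x, G (G x) = G x) (x : V) : G ((2 : R) • G x - x) = G x := by
  rw [map_sub, map_smul, hG, two_smul, add_sub_cancel_right]

theorem LinearMap.two_smul_sub_self_involutive_of_idempotent {G : V →ₗ[R] V}
    (hG : ∀ x, G (G x) = G x) (x : V) :
    (2 : R) • G ((2 : R) • G x - x) - ((2 : R) • G x - x) = x := by
  rw [G.apply_two_smul_sub_self_of_idempotent hG, sub_sub_cancel]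

end Reflection

/-- Equivalence between the consensus-equilibrium equation `F(S) = G(S)` and the
fixed-point equation for `T = (2F - I)(2G - I)` at `Q = (2G - I)(S)`, for a linear
idempotent `G` and an arbitrary map `F`; moreover `S` is recovered as `(2G - I)(Q)`. -/
theorem mace_fixed_point_equivalence
    {V : Type*} [AddCommGroup V] [Module ℝ V]
    (G : V →ₗ[ℝ] V) (hG : ∀ x, G (G x) = G x)
    (F : V → V) (S : V) :
    let Q := (2:ℝ) • G S - S
    (F S = G S ↔ (2:ℝ) • F ((2:ℝ) • G Q - Q) - ((2:ℝ) • G Q - Q) = Q) ∧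
    (F S = G S → S = (2:ℝ) • G Q - Q) := by
  intro Q
  have hS : (2:ℝ) • G Q - Q = S := G.two_smul_sub_self_involutive_of_idempotent hG S
  rw [hS]
  refine ⟨?_, fun _ => rfl⟩
  rw [sub_left_inj, smul_right_inj two_ne_zero]
end
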